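/- Let σ be a non-trivial involution on {1,...,n}. An involution ρ on P_n^σ is a good involution if and only if ρ(0) = 0 and the restriction of ρ to {1,...,n} commutes with σ. -/

import Mathlib

/-- The operation of `P_n^σ` on `{0,1,...,n}`: `x*y = x` if `y ≠ 0`, `x*0 = σ x`
(with `σ` a permutation fixing `0`, encoding a permutation of `{1,...,n}`). -/
def pOp {n : ℕ} (σ : Equiv.Perm (Fin (n + 1))) (x y : Fin (n + 1)) : Fin (n + 1) :=
  if y = 0 then σ x else x

/-- The dual operation `x ¯* y` of `P_n^σ`: the unique `z` with `z*y = x`. -/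
def pInvOp {n : ℕ} (σ : Equiv.Perm (Fin (n + 1))) (x y : Fin (n + 1)) : Fin (n + 1) :=
  if y = 0 then σ⁻¹ x else x

open Function

theorem Function.commute_iff_forall_ne_of_isFixedPt {α : Type*} {f g : α → α} {a : α}
    (hf : IsFixedPt f a) (hg : IsFixedPt g a) :
    Function.Commute f g ↔ ∀ x, x ≠ a → f (g x) = g (f x) := by
  refine ⟨fun h x _ => h x, fun h x => ?_⟩
  by_cases hx : x = a
  · rw [hx, hg.eq, hf.eq, hg.eq]
  · exact h x hx

section PQuandle

variable {n : ℕ} (σ : Equiv.Perm (Fin (n + 1)))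

@[simp]
theorem pOp_zero (x : Fin (n + 1)) : pOp σ x 0 = σ x := if_pos rfl

theorem pOp_of_ne_zero {x y : Fin (n + 1)} (hy : y ≠ 0) : pOp σ x y = x := if_neg hy

@[simp]
theorem pInvOp_zero (x : Fin (n + 1)) : pInvOp σ x 0 = σ⁻¹ x := if_pos rfl

theorem pInvOp_of_ne_zero {x y : Fin (n + 1)} (hy : y ≠ 0) : pInvOp σ x y = x := if_neg hy

theorem forall_map_pOp_iff_commute {ρ : Fin (n + 1) → Fin (n + 1)} :
    (∀ x y, ρ (pOp σ x y) = pOp σ (ρ x) y) ↔ Function.Commute ρ σ := by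
  refine ⟨fun h x => by simpa using h x 0, fun h x y => ?_⟩
  by_cases hy : y = 0
  · simpa [hy] using h x
  · rw [pOp_of_ne_zero σ hy, pOp_of_ne_zero σ hy]

/-- Only `ρ 0` can act like `0`, through `σ⁻¹ = σ ≠ 1`; every other `ρ y` acts trivially. -/
theorem forall_pOp_map_eq_pInvOp_iff {ρ : Fin (n + 1) → Fin (n + 1)} (hσ : σ ≠ 1)
    (hσ2 : σ * σ = 1) (hρ : Injective ρ) :
    (∀ x y, pOp σ x (ρ y) = pInvOp σ x y) ↔ ρ 0 = 0 := by
  constructor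
  · intro h
    by_contra hρ0
    refine hσ (inv_eq_one.mp (Equiv.ext fun x => ?_))
    have hx := h x 0
    rw [pOp_of_ne_zero σ hρ0, pInvOp_zero] at hx
    exact hx.symm
  · intro hρ0 x y
    by_cases hy : y = 0
    · rw [hy, hρ0, pOp_zero, pInvOp_zero, inv_eq_of_mul_eq_one_right hσ2]
    · have hρy : ρ y ≠ 0 := fun h => hy (hρ (h.trans hρ0.symm))
      rw [pOp_of_ne_zero σ hρy, pInvOp_of_ne_zero σ hy]

end PQuandle

/-- For a non-trivial involution `σ`, an involution `ρ` on `P_n^σ` is good iff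
`ρ 0 = 0` and `ρ` restricted to `{1,...,n}` commutes with `σ`. -/
theorem good_involution_iff {n : ℕ} (σ : Equiv.Perm (Fin (n + 1)))
    (hσ0 : σ 0 = 0) (hσ : σ ≠ 1) (hσ2 : σ * σ = 1)
    (ρ : Fin (n + 1) → Fin (n + 1)) (hρ : Function.Involutive ρ) :
    ((∀ x y, ρ (pOp σ x y) = pOp σ (ρ x) y) ∧
        (∀ x y, pOp σ x (ρ y) = pInvOp σ x y)) ↔
    (ρ 0 = 0 ∧ ∀ x : Fin (n + 1), x ≠ 0 → ρ (σ x) = σ (ρ x)) := by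
  rw [forall_map_pOp_iff_commute, forall_pOp_map_eq_pInvOp_iff σ hσ hσ2 hρ.injective, and_comm]
  exact and_congr_right fun hρ0 => commute_iff_forall_ne_of_isFixedPt hρ0 hσ0
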